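/- arXiv:1512.05036 — 3 statements merged into one kernel-verified Lean document; each statement's English description precedes it below -/
import Mathlib

section
/- For every finite color set D and every nondeterministic finite automaton A with input alphabet D ⊔ D⁻ there exists a function f : Tp_A × Tp_A × Tp_A → Tp_A with the following property: for every tree T over D, vertices v1, v2 of T with disjoint cones, a vertex u1 in the cone of v1 and a vertex u2 in the cone of v2, the type of the pair (u1, u2) equals f(t1, t2, t3), where t1 is the type of (v1, v2), t2 is the type of (v1, u1), and t3 is the type of (v2, u2). -/
/-- Edge relation of the reversal `R(G)` of a graph `G` with edge set `E` over
the color set `D`: colors are `D ⊕ D` (original colors `Sum.inl d` and fresh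
inverse colors `Sum.inr d = d⁻`). -/
def RevEdge {V D : Type*} (E : Set (V × D × V)) : V → (D ⊕ D) → V → Prop
  | v, Sum.inl d, w => (v, d, w) ∈ E
  | v, Sum.inr d, w => (w, d, v) ∈ E

/-- `Marks E v α w`: the word `α` over `D ⊕ D⁻` marks a path from `v` to `w`
in the reversal `R(G)` of the graph with edge set `E`. -/
def Marks {V D : Type*} (E : Set (V × D × V)) : V → List (D ⊕ D) → V → Prop
  | v, [], w => v = w
  | v, c :: α, w => ∃ u, RevEdge E v c u ∧ Marks E u α w

/-- `IsEdgePath E v l w`: the list of edges `l` forms a directed path from `v`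
to `w` in the graph with edge set `E`. -/
def IsEdgePath {V D : Type*} (E : Set (V × D × V)) : V → List (V × D × V) → V → Prop
  | v, [], w => v = w
  | v, e :: l, w => e ∈ E ∧ e.1 = v ∧ IsEdgePath E e.2.2 l w

/-- A graph is a tree if it has a root from which every vertex is reachable by
a unique directed path. -/
def IsTree {V D : Type*} (E : Set (V × D × V)) : Prop :=
  ∃ r : V, ∀ v : V, ∃! l : List (V × D × V), IsEdgePath E r l v

/-- The cone of a vertex `v`: the set of vertices reachable from `v` by a
directed path (including `v` itself). -/
def Cone {V D : Type*} (E : Set (V × D × V)) (v : V) : Set V :=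
  {w | ∃ l : List (V × D × V), IsEdgePath E v l w}

/-- `AutRun Δ q α q'`: the nondeterministic finite automaton with transition
relation `Δ` can go from state `q` to state `q'` reading the word `α`. -/
def AutRun {D Q : Type*} (Δ : Set (Q × (D ⊕ D) × Q)) : Q → List (D ⊕ D) → Q → Prop
  | q, [], q' => q = q'
  | q, c :: α, q' => ∃ q'', (q, c, q'') ∈ Δ ∧ AutRun Δ q'' α q'

/-- The automaton with transition relation `Δ` can switch from state `q1` to
state `q2` on a path from `v1` to `v2`: some word over `D ⊕ D⁻` marks a path
from `v1` to `v2` in `R(T)` and takes the automaton from `q1` to `q2`. -/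
def Switch {V D Q : Type*} (E : Set (V × D × V)) (Δ : Set (Q × (D ⊕ D) × Q))
    (q1 q2 : Q) (v1 v2 : V) : Prop :=
  ∃ α : List (D ⊕ D), Marks E v1 α v2 ∧ AutRun Δ q1 α q2

/-- The vertex-pair type of `(v1, v2)`: the pair of sets of state pairs
`(q1, q2)` such that the automaton can switch from `q1` to `q2` on a path from
`v1` to `v2` (resp. from `v2` to `v1`). -/
def pairType {V D Q : Type*} (E : Set (V × D × V)) (Δ : Set (Q × (D ⊕ D) × Q))
    (v1 v2 : V) : Set (Q × Q) × Set (Q × Q) :=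
  ({q | Switch E Δ q.1 q.2 v1 v2}, {q | Switch E Δ q.1 q.2 v2 v1})

section Aux

variable {V D Q : Type*}

lemma isEdgePath_append {E : Set (V × D × V)} {v w x : V} {l l' : List (V × D × V)}
    (h : IsEdgePath E v l w) (h' : IsEdgePath E w l' x) : IsEdgePath E v (l ++ l') x := by
  induction l generalizing v with
  | nil =>
    have hv : v = w := h
    simpa [hv] using h'
  | cons e l ih =>
    obtain ⟨he, hv, hp⟩ := h
    exact ⟨he, hv, ih hp⟩

lemma cone_step {E : Set (V × D × V)} {v x y : V} {d : D}
    (hx : x ∈ Cone E v) (he : (x, d, y) ∈ E) : y ∈ Cone E v := by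
  obtain ⟨l, hl⟩ := hx
  exact ⟨l ++ [(x, d, y)], isEdgePath_append hl ⟨he, rfl, rfl⟩⟩

lemma isEdgePath_dropLast {E : Set (V × D × V)} {v w : V} {l : List (V × D × V)}
    {e : V × D × V} (h : IsEdgePath E v (l ++ [e]) w) : IsEdgePath E v l e.1 := by
  induction l generalizing v with
  | nil =>
    obtain ⟨_, hv, _⟩ := h
    exact hv.symm
  | cons e' l ih =>
    obtain ⟨he', hv, hp⟩ := h
    exact ⟨he', hv, ih hp⟩

/-- In a tree, an edge from outside a cone into the cone must land on the apex. -/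
lemma edge_into_cone {E : Set (V × D × V)} (hT : IsTree E) {v x y : V} {d : D}
    (he : (y, d, x) ∈ E) (hx : x ∈ Cone E v) (hy : y ∉ Cone E v) : x = v := by
  by_contra hne
  obtain ⟨r, hr⟩ := hT
  obtain ⟨q, hq⟩ := hx
  obtain ⟨pv, hpv, _⟩ := hr v
  obtain ⟨py, hpy, _⟩ := hr y
  rcases List.eq_nil_or_concat q with rfl | ⟨q', e, rfl⟩
  · exact hne hq.symm
  · rw [List.concat_eq_append] at hq
    have h1 : IsEdgePath E r (pv ++ (q' ++ [e])) x := isEdgePath_append hpv hq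
    have h2 : IsEdgePath E r (py ++ [(y, d, x)]) x :=
      isEdgePath_append hpy ⟨he, rfl, rfl⟩
    have heq : pv ++ (q' ++ [e]) = py ++ [(y, d, x)] :=
      ((hr x).unique h1 h2)
    rw [← List.append_assoc] at heq
    obtain ⟨h3, h4⟩ := List.append_inj' heq rfl
    have he' : e = (y, d, x) := by simpa using h4
    have : IsEdgePath E v q' y := by
      have := isEdgePath_dropLast hq
      rwa [he'] at this
    exact hy ⟨q', this⟩

lemma revEdge_into_cone {E : Set (V × D × V)} (hT : IsTree E) {v x y : V} {c : D ⊕ D}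
    (h : RevEdge E x c y) (hx : x ∉ Cone E v) (hy : y ∈ Cone E v) : y = v := by
  cases c with
  | inl d => exact edge_into_cone hT h hy hx
  | inr d => exact absurd (cone_step hy h) hx

lemma revEdge_out_cone {E : Set (V × D × V)} (hT : IsTree E) {v x y : V} {c : D ⊕ D}
    (h : RevEdge E x c y) (hx : x ∈ Cone E v) (hy : y ∉ Cone E v) : x = v := by
  cases c with
  | inl d => exact absurd (cone_step hx h) hy
  | inr d => exact edge_into_cone hT h hx hy

lemma marks_append {E : Set (V × D × V)} {v w x : V} {α β : List (D ⊕ D)}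
    (h : Marks E v α w) (h' : Marks E w β x) : Marks E v (α ++ β) x := by
  induction α generalizing v with
  | nil =>
    have hv : v = w := h
    simpa [hv] using h'
  | cons c α ih =>
    obtain ⟨u, hu, hm⟩ := h
    exact ⟨u, hu, ih hm⟩

lemma autRun_append {Δ : Set (Q × (D ⊕ D) × Q)} {q q' : Q} {α β : List (D ⊕ D)}
    (h : AutRun Δ q α q') {q'' : Q} (h' : AutRun Δ q' β q'') :
    AutRun Δ q (α ++ β) q'' := by
  induction α generalizing q with
  | nil =>
    have hq : q = q' := h
    simpa [hq] using h'
  | cons c α ih =>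
    obtain ⟨p, hp, hm⟩ := h
    exact ⟨p, hp, ih hm⟩

lemma autRun_split {Δ : Set (Q × (D ⊕ D) × Q)} {q q' : Q} {α β : List (D ⊕ D)}
    (h : AutRun Δ q (α ++ β) q') : ∃ p, AutRun Δ q α p ∧ AutRun Δ p β q' := by
  induction α generalizing q with
  | nil => exact ⟨q, rfl, h⟩
  | cons c α ih =>
    obtain ⟨p, hp, hm⟩ := h
    obtain ⟨p', h1, h2⟩ := ih hm
    exact ⟨p', ⟨p, hp, h1⟩, h2⟩

/-- A walk starting in a cone and ending outside it splits at the apex. -/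
lemma marks_exit {E : Set (V × D × V)} (hT : IsTree E) {v x z : V} {α : List (D ⊕ D)}
    (h : Marks E x α z) (hx : x ∈ Cone E v) (hz : z ∉ Cone E v) :
    ∃ β γ, α = β ++ γ ∧ Marks E x β v ∧ Marks E v γ z := by
  induction α generalizing x with
  | nil =>
    have hxz : x = z := h
    subst hxz
    exact absurd hx hz
  | cons c α ih =>
    obtain ⟨u, hu, hm⟩ := h
    by_cases hc : u ∈ Cone E v
    · obtain ⟨β, γ, rfl, h1, h2⟩ := ih hm hc
      exact ⟨c :: β, γ, rfl, ⟨u, hu, h1⟩, h2⟩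
    · have hxv : x = v := revEdge_out_cone hT hu hx hc
      exact ⟨[], c :: α, rfl, hxv ▸ rfl, hxv ▸ ⟨u, hu, hm⟩⟩

/-- A walk starting outside a cone and ending inside it splits at the apex. -/
lemma marks_enter {E : Set (V × D × V)} (hT : IsTree E) {v x z : V} {α : List (D ⊕ D)}
    (h : Marks E x α z) (hx : x ∉ Cone E v) (hz : z ∈ Cone E v) :
    ∃ β γ, α = β ++ γ ∧ Marks E x β v ∧ Marks E v γ z := by
  induction α generalizing x with
  | nil =>
    have hxz : x = z := h
    subst hxz
    exact absurd hz hx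
  | cons c α ih =>
    obtain ⟨u, hu, hm⟩ := h
    by_cases hc : u ∈ Cone E v
    · have huv : u = v := revEdge_into_cone hT hu hx hc
      exact ⟨[c], α, rfl, ⟨u, hu, huv⟩, huv ▸ hm⟩
    · obtain ⟨β, γ, rfl, h1, h2⟩ := ih hm hc
      exact ⟨c :: β, γ, rfl, ⟨u, hu, h1⟩, h2⟩

lemma self_mem_cone {E : Set (V × D × V)} (v : V) : v ∈ Cone E v := ⟨[], rfl⟩

lemma switch_iff {E : Set (V × D × V)} {Δ : Set (Q × (D ⊕ D) × Q)} (hT : IsTree E)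
    {v1 v2 u1 u2 : V} (hd : Disjoint (Cone E v1) (Cone E v2))
    (h1 : u1 ∈ Cone E v1) (h2 : u2 ∈ Cone E v2) (q1 q2 : Q) :
    Switch E Δ q1 q2 u1 u2 ↔
      ∃ p p', Switch E Δ q1 p u1 v1 ∧ Switch E Δ p p' v1 v2 ∧ Switch E Δ p' q2 v2 u2 := by
  constructor
  · rintro ⟨α, hm, hr⟩
    have hu2 : u2 ∉ Cone E v1 := fun h => Set.disjoint_left.mp hd h h2
    obtain ⟨β, γ, rfl, hβ, hγ⟩ := marks_exit hT hm h1 hu2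
    have hv1 : v1 ∉ Cone E v2 := fun h => Set.disjoint_left.mp hd (self_mem_cone v1) h
    obtain ⟨γ1, γ2, rfl, hγ1, hγ2⟩ := marks_enter hT hγ hv1 h2
    obtain ⟨p, hrβ, hrγ⟩ := autRun_split hr
    obtain ⟨p', hrγ1, hrγ2⟩ := autRun_split hrγ
    exact ⟨p, p', ⟨β, hβ, hrβ⟩, ⟨γ1, hγ1, hrγ1⟩, ⟨γ2, hγ2, hrγ2⟩⟩
  · rintro ⟨p, p', ⟨α, hα, hrα⟩, ⟨β, hβ, hrβ⟩, ⟨γ, hγ, hrγ⟩⟩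
    exact ⟨α ++ β ++ γ, marks_append (marks_append hα hβ) hγ,
      autRun_append (autRun_append hrα hrβ) hrγ⟩

end Aux

/-- For every finite color set `D` and nondeterministic finite automaton with
input alphabet `D ⊕ D⁻`, there is a function `f : Tp × Tp × Tp → Tp` on
vertex-pair types such that for every tree `T` over `D`, vertices `v1, v2`
with disjoint cones, `u1` in the cone of `v1` and `u2` in the cone of `v2`,
the type of `(u1, u2)` equals `f` applied to the types of `(v1, v2)`,
`(v1, u1)` and `(v2, u2)`. -/
theorem type_calculation2 {D Q : Type*} [Fintype D] [Fintype Q]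
    (Δ : Set (Q × (D ⊕ D) × Q)) :
    ∃ f : (Set (Q × Q) × Set (Q × Q)) → (Set (Q × Q) × Set (Q × Q)) →
        (Set (Q × Q) × Set (Q × Q)) → (Set (Q × Q) × Set (Q × Q)),
      ∀ (V : Type*) (E : Set (V × D × V)), IsTree E →
        ∀ v1 v2 u1 u2 : V, Disjoint (Cone E v1) (Cone E v2) →
          u1 ∈ Cone E v1 → u2 ∈ Cone E v2 →
          pairType E Δ u1 u2 =
            f (pairType E Δ v1 v2) (pairType E Δ v1 u1) (pairType E Δ v2 u2) := by

  refine ⟨fun t1 t2 t3 =>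
    ({q | ∃ p p', (q.1, p) ∈ t2.2 ∧ (p, p') ∈ t1.1 ∧ (p', q.2) ∈ t3.1},
     {q | ∃ p p', (q.1, p) ∈ t3.2 ∧ (p, p') ∈ t1.2 ∧ (p', q.2) ∈ t2.1}),
    fun V E hT v1 v2 u1 u2 hd h1 h2 => ?_⟩
  unfold pairType
  refine Prod.ext ?_ ?_ <;> ext ⟨q1, q2⟩ <;>
    simp only [Set.mem_setOf_eq]
  · exact switch_iff hT hd h1 h2 q1 q2
  · exact switch_iff hT hd.symm h2 h1 q1 q2
end

section
/- In the deterministic-tree setup: for every R_c-limit point v0, the relation ⊏ on P_{v0} defined by w1 ⊏ w2 iff w1 ≠ w2 and w2 lies in the T-cone of w1 is a strict linear order on P_{v0} of order type ω, i.e. (P_{v0}, ⊏) is order-isomorphic to (ℕ, <). -/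
/-- A graph is deterministic if for every vertex and color there is at most
one outgoing edge of that color. -/
def IsDeterministic {V D : Type*} (E : Set (V × D × V)) : Prop :=
  ∀ (v : V) (d : D) (w w' : V), (v, d, w) ∈ E → (v, d, w') ∈ E → w = w'

/-- `v0` is a limit point of the strict (well-)order `R`: it is not the least
element and it is the supremum of the elements strictly below it. -/
def IsLimitPt {V : Type*} (R : V → V → Prop) (v0 : V) : Prop :=
  (∃ v, R v v0) ∧ ∀ v, R v v0 → ∃ w, R v w ∧ R w v0

/-- A set `B` is `R`-cofinal in `v0`: all its elements are strictly `R`-below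
`v0` and `sup_R B = v0`. -/
def CofinalIn {V : Type*} (R : V → V → Prop) (B : Set V) (v0 : V) : Prop :=
  (∀ b ∈ B, R b v0) ∧ ∀ v, R v v0 → ∃ b ∈ B, (b = v ∨ R v b)

/-- `S_{v0}`: the set of vertices whose `T`-cone contains a subset cofinal
in `v0`. -/
def Sset {V D : Type*} (E : Set (V × D × V)) (R : V → V → Prop) (v0 : V) : Set V :=
  {v | ∃ B ⊆ Cone E v, CofinalIn R B v0}

/-- `P_{v0}`: the set of vertices of `S_{v0}` whose `T`-cone does not
contain `v0`. -/
def Pset {V D : Type*} (E : Set (V × D × V)) (R : V → V → Prop) (v0 : V) : Set V :=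
  {v | v ∈ Sset E R v0 ∧ v0 ∉ Cone E v}

/-!
On `P_{v0}` the order `⊏` is the ancestor order of the tree, so it suffices to show that `P_{v0}`
is a chain containing vertices of every depth: depth then identifies `(P_{v0}, ⊏)` with an infinite
subset of `(ℕ, <)`.

`S_{v0}` is a chain by a pigeonhole argument over the finitely many sets of automaton states.
Every vertex of `S_{v0}` has a child in `S_{v0}`: since `v0` is a limit, a cofinal set stays
cofinal after removing its root, and one of the finitely many children (the tree is deterministic
over a finite color set) carries a cofinal part of it. Starting from the root, this yields
vertices of `S_{v0}` of every depth, and those deeper than `v0` lie in `P_{v0}`.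
-/

open Function Set

section Paths

variable {V D Q : Type*} {E : Set (V × D × V)}

lemma IsEdgePath.append {l₁ : List (V × D × V)} :
    ∀ {l₂ : List (V × D × V)} {u v w : V},
      IsEdgePath E u l₁ v → IsEdgePath E v l₂ w → IsEdgePath E u (l₁ ++ l₂) w := by
  induction l₁ with
  | nil => rintro l₂ u v w rfl h; exact h
  | cons e l ih => intro l₂ u v w h h'; exact ⟨h.1, h.2.1, ih h.2.2 h'⟩

lemma IsEdgePath.exists_of_append {l₁ : List (V × D × V)} :
    ∀ {l₂ : List (V × D × V)} {u w : V},
      IsEdgePath E u (l₁ ++ l₂) w → ∃ v, IsEdgePath E u l₁ v ∧ IsEdgePath E v l₂ w := by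
  induction l₁ with
  | nil => intro l₂ u w h; exact ⟨u, rfl, h⟩
  | cons e l ih =>
    intro l₂ u w h
    obtain ⟨v, h₁, h₂⟩ := ih h.2.2
    exact ⟨v, ⟨h.1, h.2.1, h₁⟩, h₂⟩

lemma IsEdgePath.right_unique {l : List (V × D × V)} :
    ∀ {u w w' : V}, IsEdgePath E u l w → IsEdgePath E u l w' → w = w' := by
  induction l with
  | nil => rintro u w w' rfl rfl; rfl
  | cons e l ih => intro u w w' h h'; exact ih h.2.2 h'.2.2

lemma isEdgePath_singleton {u w : V} {d : D} (h : (u, d, w) ∈ E) :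
    IsEdgePath E u [(u, d, w)] w :=
  ⟨h, rfl, rfl⟩

lemma mem_cone_self (v : V) : v ∈ Cone E v := ⟨[], rfl⟩

lemma mem_cone_of_edge {u w : V} {d : D} (h : (u, d, w) ∈ E) : w ∈ Cone E u :=
  ⟨_, isEdgePath_singleton h⟩

lemma mem_cone_trans {u v w : V} (h₁ : v ∈ Cone E u) (h₂ : w ∈ Cone E v) : w ∈ Cone E u :=
  let ⟨_, h₁⟩ := h₁
  let ⟨_, h₂⟩ := h₂
  ⟨_, h₁.append h₂⟩

lemma exists_edge_mem_cone_of_ne {u x : V} (hx : x ∈ Cone E u) (hne : x ≠ u) :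
    ∃ d c, (u, d, c) ∈ E ∧ x ∈ Cone E c := by
  obtain ⟨_ | ⟨⟨u', d, c⟩, l⟩, hl⟩ := hx
  · exact absurd hl.symm hne
  · obtain ⟨he, rfl, hl⟩ := hl
    exact ⟨d, c, he, l, hl⟩

lemma Marks.append {α : List (D ⊕ D)} :
    ∀ {β : List (D ⊕ D)} {u v w : V},
      Marks E u α v → Marks E v β w → Marks E u (α ++ β) w := by
  induction α with
  | nil => rintro β u v w rfl h; exact h
  | cons c α ih =>
    rintro β u v w ⟨x, hx, h⟩ h'
    exact ⟨x, hx, ih h h'⟩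

lemma AutRun.append {Δ : Set (Q × (D ⊕ D) × Q)} {α : List (D ⊕ D)} :
    ∀ {β : List (D ⊕ D)} {q q' q'' : Q},
      AutRun Δ q α q' → AutRun Δ q' β q'' → AutRun Δ q (α ++ β) q'' := by
  induction α with
  | nil => rintro β q q' q'' rfl h; exact h
  | cons c α ih =>
    rintro β q q' q'' ⟨p, hp, h⟩ h'
    exact ⟨p, hp, ih h h'⟩

lemma AutRun.exists_of_append {Δ : Set (Q × (D ⊕ D) × Q)} {α : List (D ⊕ D)} :
    ∀ {β : List (D ⊕ D)} {q q'' : Q},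
      AutRun Δ q (α ++ β) q'' → ∃ q', AutRun Δ q α q' ∧ AutRun Δ q' β q'' := by
  induction α with
  | nil => intro β q q'' h; exact ⟨q, rfl, h⟩
  | cons c α ih =>
    rintro β q q'' ⟨p, hp, h⟩
    obtain ⟨q', h₁, h₂⟩ := ih h
    exact ⟨q', ⟨p, hp, h₁⟩, h₂⟩

lemma Switch.trans {Δ : Set (Q × (D ⊕ D) × Q)} {q q' q'' : Q} {u v w : V}
    (h₁ : Switch E Δ q q' u v) (h₂ : Switch E Δ q' q'' v w) : Switch E Δ q q'' u w :=
  let ⟨_, hm₁, hr₁⟩ := h₁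
  let ⟨_, hm₂, hr₂⟩ := h₂
  ⟨_, hm₁.append hm₂, hr₁.append hr₂⟩

end Paths

section Tree

variable {V D Q : Type*} {E : Set (V × D × V)} {r : V}
  (hr : ∀ v : V, ∃! l : List (V × D × V), IsEdgePath E r l v)

noncomputable def rootPath (v : V) : List (V × D × V) := (hr v).exists.choose

noncomputable def depth (v : V) : ℕ := (rootPath hr v).length

lemma isEdgePath_rootPath (v : V) : IsEdgePath E r (rootPath hr v) v :=
  (hr v).exists.choose_spec

include hr in
lemma mem_cone_root (v : V) : v ∈ Cone E r := ⟨_, isEdgePath_rootPath hr v⟩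

lemma rootPath_eq_append {v w : V} {l : List (V × D × V)} (h : IsEdgePath E v l w) :
    rootPath hr w = rootPath hr v ++ l :=
  (hr w).unique (isEdgePath_rootPath hr w) ((isEdgePath_rootPath hr v).append h)

lemma depth_eq_add_length {v w : V} {l : List (V × D × V)} (h : IsEdgePath E v l w) :
    depth hr w = depth hr v + l.length := by
  rw [depth, depth, rootPath_eq_append hr h, List.length_append]

lemma depth_le_of_mem_cone {v w : V} (h : w ∈ Cone E v) : depth hr v ≤ depth hr w := by
  obtain ⟨l, hl⟩ := h
  rw [depth_eq_add_length hr hl]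
  exact Nat.le_add_right _ _

lemma eq_of_mem_cone_of_depth_le {v w : V} (h : w ∈ Cone E v) (hd : depth hr w ≤ depth hr v) :
    v = w := by
  obtain ⟨l, hl⟩ := h
  rw [depth_eq_add_length hr hl] at hd
  obtain rfl : l = [] := List.eq_nil_of_length_eq_zero (by omega)
  exact hl

lemma depth_lt_of_mem_cone {v w : V} (h : w ∈ Cone E v) (hne : v ≠ w) :
    depth hr v < depth hr w :=
  (depth_le_of_mem_cone hr h).lt_of_ne fun hd => hne (eq_of_mem_cone_of_depth_le hr h hd.ge)

lemma depth_lt_iff_of_mem_cone_or_mem_cone {u v : V} (h : u ∈ Cone E v ∨ v ∈ Cone E u) :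
    depth hr u < depth hr v ↔ u ≠ v ∧ v ∈ Cone E u := by
  refine ⟨fun hlt => ?_, fun ⟨hne, h⟩ => depth_lt_of_mem_cone hr h hne⟩
  rcases h with h | h
  · exact absurd (depth_le_of_mem_cone hr h) hlt.not_ge
  · exact ⟨by rintro rfl; exact hlt.false, h⟩

lemma eq_of_depth_eq_of_mem_cone_or_mem_cone {u v : V} (h : u ∈ Cone E v ∨ v ∈ Cone E u)
    (hd : depth hr u = depth hr v) : u = v := by
  rcases h with h | h
  · exact (eq_of_mem_cone_of_depth_le hr h hd.le).symm
  · exact eq_of_mem_cone_of_depth_le hr h hd.ge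

lemma mem_cone_iff_rootPath_prefix {v w : V} :
    w ∈ Cone E v ↔ rootPath hr v <+: rootPath hr w := by
  refine ⟨fun ⟨l, hl⟩ => ⟨l, (rootPath_eq_append hr hl).symm⟩, fun ⟨l, hl⟩ => ?_⟩
  have hw := isEdgePath_rootPath hr w
  rw [← hl] at hw
  obtain ⟨v', hv', hl⟩ := hw.exists_of_append
  rw [(isEdgePath_rootPath hr v).right_unique hv']
  exact ⟨l, hl⟩

include hr in
lemma mem_cone_or_mem_cone_of_mem_cone {u v x : V} (hu : x ∈ Cone E u) (hv : x ∈ Cone E v) :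
    u ∈ Cone E v ∨ v ∈ Cone E u := by
  simp only [mem_cone_iff_rootPath_prefix hr] at hu hv ⊢
  exact List.prefix_or_prefix_of_prefix hv hu

include hr in
lemma mem_cone_of_edge_of_ne {u x p : V} {d : D} (hx : x ∈ Cone E u) (hne : x ≠ u)
    (hp : (p, d, x) ∈ E) : p ∈ Cone E u := by
  rcases mem_cone_or_mem_cone_of_mem_cone hr (mem_cone_of_edge hp) hx with h | h
  · exact h
  · have hpx := depth_eq_add_length hr (isEdgePath_singleton hp)
    have hux := depth_lt_of_mem_cone hr hx hne.symm
    rw [eq_of_mem_cone_of_depth_le hr h (by rw [List.length_singleton] at hpx; omega)]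
    exact mem_cone_self u

include hr in
lemma Marks.exists_split_of_exit {α : List (D ⊕ D)} :
    ∀ {x y u : V}, x ∈ Cone E u → y ∉ Cone E u → Marks E x α y →
      ∃ α₁ α₂, α = α₁ ++ α₂ ∧ Marks E x α₁ u ∧ Marks E u α₂ y := by
  induction α with
  | nil => rintro x y u hx hy rfl; exact absurd hx hy
  | cons c α ih =>
    intro x y u hx hy h
    by_cases hxu : x = u
    · subst hxu
      exact ⟨[], c :: α, rfl, rfl, h⟩
    obtain ⟨x', hstep, h⟩ := h
    have hx' : x' ∈ Cone E u := by
      cases c with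
      | inl d => exact mem_cone_trans hx (mem_cone_of_edge hstep)
      | inr d => exact mem_cone_of_edge_of_ne hr hx hxu hstep
    obtain ⟨α₁, α₂, rfl, h₁, h₂⟩ := ih hx' hy h
    exact ⟨c :: α₁, α₂, rfl, ⟨x', hstep, h₁⟩, h₂⟩

include hr in
lemma Switch.exists_split_of_exit {Δ : Set (Q × (D ⊕ D) × Q)} {q q'' : Q} {x y u : V}
    (hx : x ∈ Cone E u) (hy : y ∉ Cone E u) (h : Switch E Δ q q'' x y) :
    ∃ q', Switch E Δ q q' x u ∧ Switch E Δ q' q'' u y := by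
  obtain ⟨α, hm, hrun⟩ := h
  obtain ⟨α₁, α₂, rfl, h₁, h₂⟩ := hm.exists_split_of_exit hr hx hy
  obtain ⟨q', hr₁, hr₂⟩ := hrun.exists_of_append
  exact ⟨q', ⟨α₁, h₁, hr₁⟩, ⟨α₂, h₂, hr₂⟩⟩

end Tree

section Cofinal

variable {α : Type*} {R : α → α → Prop} {B : Set α} {a : α}

lemma CofinalIn.nonempty (hB : CofinalIn R B a) (ha : IsLimitPt R a) : B.Nonempty :=
  let ⟨_, hx⟩ := ha.1
  let ⟨b, hb, _⟩ := hB.2 _ hx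
  ⟨b, hb⟩

lemma CofinalIn.exists_gt [IsTrans α R] (hB : CofinalIn R B a) (ha : IsLimitPt R a) {x : α}
    (hx : R x a) : ∃ b ∈ B, R x b := by
  obtain ⟨y, hxy, hya⟩ := ha.2 x hx
  obtain ⟨b, hb, rfl | hyb⟩ := hB.2 y hya
  exacts [⟨_, hb, hxy⟩, ⟨b, hb, _root_.trans hxy hyb⟩]

lemma CofinalIn.diff_singleton [IsStrictOrder α R] (hB : CofinalIn R B a) (ha : IsLimitPt R a)
    (x : α) : CofinalIn R (B \ {x}) a := by
  refine ⟨fun b hb => hB.1 b hb.1, fun v hv => ?_⟩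
  obtain ⟨b, hb, hvb⟩ := hB.exists_gt ha hv
  by_cases hbx : b = x
  · subst hbx
    obtain ⟨b', hb', hbb'⟩ := hB.exists_gt ha (hB.1 b hb)
    exact ⟨b', ⟨hb', fun h => irrefl_of R b (h ▸ hbb')⟩, Or.inr (_root_.trans hvb hbb')⟩
  · exact ⟨b, ⟨hb, hbx⟩, Or.inr hvb⟩

lemma CofinalIn.exists_cofinalIn_inter [IsStrictTotalOrder α R] {ι : Type*} [Finite ι]
    (hB : CofinalIn R B a) (ha : IsLimitPt R a) (C : ι → Set α) (hC : B ⊆ ⋃ i, C i) :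
    ∃ i, CofinalIn R (B ∩ C i) a := by
  classical
  let := linearOrderOfSTO R
  by_contra! hcon
  have hbound : ∀ i, ∃ v, R v a ∧ ∀ b ∈ B ∩ C i, ¬ (b = v ∨ R v b) := by
    intro i
    by_contra! h
    exact hcon i ⟨fun b hb => hB.1 b hb.1, h⟩
  choose g hga hg using hbound
  obtain ⟨b₀, hb₀⟩ := hB.nonempty ha
  obtain ⟨i₀, -⟩ := mem_iUnion.mp (hC hb₀)
  have : Nonempty ι := ⟨i₀⟩
  obtain ⟨i, hi⟩ := Finite.exists_max g
  obtain ⟨b, hb, hgb⟩ := hB.2 (g i) (hga i)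
  obtain ⟨j, hj⟩ := mem_iUnion.mp (hC hb)
  refine hg j b ⟨hb, hj⟩ ?_
  rcases hi j with hij | hij
  · exact hij ▸ hgb
  · rcases hgb with rfl | hgb
    exacts [Or.inr hij, Or.inr (_root_.trans hij hgb)]

end Cofinal

section Sset

variable {V D : Type*} {E : Set (V × D × V)} {R : V → V → Prop} {v0 : V}

lemma exists_edge_mem_Sset [IsStrictTotalOrder V R] [Finite D] (hdet : IsDeterministic E)
    (hlim : IsLimitPt R v0) {u : V} (hu : u ∈ Sset E R v0) :
    ∃ d c, (u, d, c) ∈ E ∧ c ∈ Sset E R v0 := by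
  obtain ⟨B, hBu, hB⟩ := hu
  have hB' := hB.diff_singleton hlim u
  have hcover : B \ {u} ⊆ ⋃ d : D, {x | ∃ c, (u, d, c) ∈ E ∧ x ∈ Cone E c} := by
    rintro b ⟨hb, hbu⟩
    obtain ⟨d, c, hc, hbc⟩ := exists_edge_mem_cone_of_ne (hBu hb) hbu
    exact mem_iUnion.mpr ⟨d, c, hc, hbc⟩
  obtain ⟨d, hd⟩ := hB'.exists_cofinalIn_inter hlim _ hcover
  obtain ⟨-, c, hc, -⟩ := (hd.nonempty hlim).some_mem
  refine ⟨d, c, hc, _, ?_, hd⟩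
  rintro b ⟨-, c', hc', hbc'⟩
  rwa [hdet u d c c' hc hc']

variable {r : V} (hr : ∀ v : V, ∃! l : List (V × D × V), IsEdgePath E r l v)

include hr in
lemma root_mem_Sset : r ∈ Sset E R v0 :=
  ⟨{v | R v v0}, fun v _ => mem_cone_root hr v, fun _ h => h, fun v hv => ⟨v, hv, Or.inl rfl⟩⟩

lemma exists_mem_Sset_le_depth [IsStrictTotalOrder V R] [Finite D] (hdet : IsDeterministic E)
    (hlim : IsLimitPt R v0) (n : ℕ) : ∃ u ∈ Sset E R v0, n ≤ depth hr u := by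
  induction n with
  | zero => exact ⟨r, root_mem_Sset hr, Nat.zero_le _⟩
  | succ n ih =>
    obtain ⟨u, hu, hn⟩ := ih
    obtain ⟨d, c, hc, hcS⟩ := exists_edge_mem_Sset hdet hlim hu
    refine ⟨c, hcS, ?_⟩
    rw [depth_eq_add_length hr (isEdgePath_singleton hc)]
    exact Nat.succ_le_succ hn

lemma mem_Pset_of_depth_lt {u : V} (hu : u ∈ Sset E R v0) (h : depth hr v0 < depth hr u) :
    u ∈ Pset E R v0 :=
  ⟨hu, fun hv => (depth_le_of_mem_cone hr hv).not_gt h⟩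

end Sset

section Switch

variable {V D Q : Type*} [Finite Q] {E : Set (V × D × V)} {r : V}
  (hr : ∀ v : V, ∃! l : List (V × D × V), IsEdgePath E r l v)
  {Δ : Set (Q × (D ⊕ D) × Q)} {qI qc : Q} [IsStrictTotalOrder V (Switch E Δ qI qc)] {v0 : V}

include hr in
/-- If `u` and `v` had disjoint cones, split a cofinal subset of `Cone u` by the set of states
reachable from `qI` on a path to `u`, and take `b₁ R_c y R_c b₂` with `b₁, b₂` in the same cofinal
piece and `y ∈ Cone v`. The run witnessing `b₁ R_c y` passes through `u`, and `b₂` can reach the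
same state at `u`, so `b₂ R_c y`: a contradiction. -/
lemma mem_cone_or_mem_cone_of_mem_Sset (hlim : IsLimitPt (Switch E Δ qI qc) v0) {u v : V}
    (hu : u ∈ Sset E (Switch E Δ qI qc) v0) (hv : v ∈ Sset E (Switch E Δ qI qc) v0) :
    u ∈ Cone E v ∨ v ∈ Cone E u := by
  by_contra! hcon
  have hdisj : ∀ x ∈ Cone E u, x ∉ Cone E v := fun x hxu hxv =>
    (mem_cone_or_mem_cone_of_mem_cone hr hxu hxv).elim hcon.1 hcon.2
  obtain ⟨Bu, hBu, hBucof⟩ := hu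
  obtain ⟨Bv, hBv, hBvcof⟩ := hv
  obtain ⟨s, hs⟩ := hBucof.exists_cofinalIn_inter hlim
    (fun s : Set Q => {b | {q | Switch E Δ qI q b u} = s})
    (fun b _ => mem_iUnion.mpr ⟨_, rfl⟩)
  obtain ⟨b₁, hb₁, hb₁s⟩ := hs.nonempty hlim
  obtain ⟨y, hy, hb₁y⟩ := hBvcof.exists_gt hlim (hs.1 b₁ ⟨hb₁, hb₁s⟩)
  obtain ⟨b₂, ⟨-, hb₂s⟩, hyb₂⟩ := hs.exists_gt hlim (hBvcof.1 y hy)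
  obtain ⟨q, hb₁u, huy⟩ :=
    Switch.exists_split_of_exit hr (hBu hb₁) (fun h => hdisj y h (hBv hy)) hb₁y
  have hb₂u : q ∈ {q | Switch E Δ qI q b₂ u} := by
    rw [hb₂s, ← hb₁s]
    exact hb₁u
  exact asymm_of _ hyb₂ (hb₂u.trans huy)

end Switch

theorem exists_equiv_nat_lt_iff_of_injective {A : Type*} {f : A → ℕ} (hf : Injective f)
    (hunb : ¬ BddAbove (range f)) : ∃ e : A ≃ ℕ, ∀ a b, e a < e b ↔ f a < f b := by
  have : Infinite (range f) := (infinite_of_not_bddAbove hunb).to_subtype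
  refine ⟨(Equiv.ofInjective f hf).trans (Nat.Subtype.orderIsoOfNat (range f)).symm.toEquiv,
    fun a b => ?_⟩
  change (Nat.Subtype.orderIsoOfNat _).symm _ < (Nat.Subtype.orderIsoOfNat _).symm _ ↔ _
  rw [OrderIso.lt_iff_lt]
  rfl

/-- Deterministic-tree setup: `T` is a deterministic tree over a finite color
set `D`, `B` is a nondeterministic finite automaton over `D ⊕ D⁻` with
distinguished states `qI, qc`, and the relation
`R_c v1 v2 := B can switch from qI to qc on a path from v1 to v2 in R(T)`
is a strict well-order on the vertices. Then for every `R_c`-limit point `v0`,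
the relation `⊏` on `P_{v0}` given by `w1 ⊏ w2 ↔ w1 ≠ w2 ∧ w2 ∈ Cone(w1)` is a
strict linear order of order type `ω`, i.e. `(P_{v0}, ⊏)` is order-isomorphic
to `(ℕ, <)`. -/
theorem Pset_orderType_omega {V D Q : Type*} [Fintype D] [Fintype Q]
    (E : Set (V × D × V)) (hTree : IsTree E) (hdet : IsDeterministic E)
    (Δ : Set (Q × (D ⊕ D) × Q)) (qI qc : Q)
    (hwo : IsWellOrder V (Switch E Δ qI qc))
    (v0 : V) (hlim : IsLimitPt (Switch E Δ qI qc) v0) :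
    ∃ e : {w // w ∈ Pset E (Switch E Δ qI qc) v0} ≃ ℕ,
      ∀ w1 w2 : {w // w ∈ Pset E (Switch E Δ qI qc) v0},
        ((w1 : V) ≠ (w2 : V) ∧ (w2 : V) ∈ Cone E (w1 : V)) ↔ e w1 < e w2 := by
  obtain ⟨r, hr⟩ := hTree
  have hchain (w1 w2 : {w // w ∈ Pset E (Switch E Δ qI qc) v0}) :
      (w1 : V) ∈ Cone E w2 ∨ (w2 : V) ∈ Cone E w1 :=
    mem_cone_or_mem_cone_of_mem_Sset hr hlim w1.2.1 w2.2.1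
  have hunbounded : ¬ BddAbove (range fun w : {w // w ∈ Pset E (Switch E Δ qI qc) v0} =>
      depth hr (w : V)) := by
    rw [not_bddAbove_iff]
    intro n
    obtain ⟨u, hu, hn⟩ := exists_mem_Sset_le_depth hr hdet hlim (max n (depth hr v0) + 1)
    exact ⟨_, ⟨⟨u, mem_Pset_of_depth_lt hr hu (by omega)⟩, rfl⟩, show n < depth hr u by omega⟩
  obtain ⟨e, he⟩ := exists_equiv_nat_lt_iff_of_injective
    (fun w1 w2 hd => Subtype.ext (eq_of_depth_eq_of_mem_cone_or_mem_cone hr (hchain w1 w2) hd))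
    hunbounded
  exact ⟨e, fun w1 w2 => (depth_lt_iff_of_mem_cone_or_mem_cone hr (hchain w1 w2)).symm.trans
    (he w1 w2).symm⟩
end

section
/- The standard system of cofinal sequences s_st on the ordinals below ω^ω has the Bachmann property: for all nonzero limit ordinals β, δ < ω^ω and every natural number n, if s_st(β, n) < δ ≤ s_st(β, n+1) then s_st(β, n) ≤ s_st(δ, 0). -/
open Ordinal
open scoped Classical

/-- The standard system of cofinal sequences on the ordinals below `ω^ω`:
if `β = ω^(m+1) * (γ+1)` (such a representation exists and is unique for every
nonzero limit ordinal `β < ω^ω`) then `s_st(β, n) = ω^(m+1)*γ + ω^m*n`;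
on ordinals without such a representation the value is irrelevant (set to `0`). -/
noncomputable def sst (β : Ordinal) (n : ℕ) : Ordinal :=
  if h : ∃ p : ℕ × Ordinal, β = omega0 ^ ((p.1 : Ordinal) + 1) * (p.2 + 1) then
    omega0 ^ ((h.choose.1 : Ordinal) + 1) * h.choose.2 +
      omega0 ^ (h.choose.1 : Ordinal) * n
  else 0

/-!
Write `β = ω^(m+1)(γ+1)` and `δ = ω^(j+1)(ρ+1)`, so that `s_st(β,n) = ω^(m+1)γ + ω^m n`
and `s_st(δ,0) = ω^(j+1)ρ`. Since `ω^(m+1)γ ≤ s_st(β,n) < δ < β = ω^(m+1)γ + ω^(m+1)`, the ordinal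
`δ` is not a multiple of `ω^(m+1)`, hence `j < m`. Then `ω^(j+1)` divides `ω^m`, hence `s_st(β,n)`,
and a multiple of `ω^(j+1)` below `ω^(j+1)(ρ+1)` is at most `ω^(j+1)ρ`.
-/

open Order

namespace Ordinal

theorem not_omega0_dvd_add_one (a : Ordinal) : ¬ ω ∣ a + 1 := by
  rw [← isSuccPrelimit_iff_omega0_dvd, ← succ_eq_add_one]
  exact not_isSuccPrelimit_succ a

theorem le_mul_of_dvd_of_lt_mul_add_one {a b c : Ordinal} (hdvd : a ∣ c) (hlt : c < a * (b + 1)) :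
    c ≤ a * b := by
  obtain ⟨d, rfl⟩ := hdvd
  exact mul_le_mul_right (lt_add_one_iff.1 (lt_of_mul_lt_mul_left' hlt)) a

theorem omega0_opow_mul_add_one_inj {a b γ ρ : Ordinal}
    (h : ω ^ a * (γ + 1) = ω ^ b * (ρ + 1)) : a = b ∧ γ = ρ := by
  have exponent_le : ∀ {a b γ ρ : Ordinal}, ω ^ a * (γ + 1) = ω ^ b * (ρ + 1) → a ≤ b := by
    intro a b γ ρ h
    by_contra! hba
    have : ω ^ b * ω ∣ ω ^ b * (ρ + 1) := by
      rw [← opow_succ, ← h]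
      exact (opow_dvd_opow _ (succ_le_of_lt hba)).mul_right _
    exact not_omega0_dvd_add_one ρ ((mul_dvd_mul_iff_left (opow_ne_zero _ omega0_ne_zero)).1 this)
  obtain rfl := (exponent_le h).antisymm (exponent_le h.symm)
  refine ⟨rfl, ?_⟩
  rw [← succ_eq_add_one, ← succ_eq_add_one] at h
  exact succ_injective (mul_left_cancel₀ (opow_ne_zero _ omega0_ne_zero) h)

theorem exists_eq_omega0_opow_mul_add_one {δ : Ordinal} (hδ : δ ≠ 0) (hlt : δ < ω ^ ω) :
    ∃ (k : ℕ) (γ : Ordinal), δ = ω ^ (k : Ordinal) * (γ + 1) := by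
  obtain ⟨c, hc, N, hN⟩ := (lt_omega0_opow omega0_ne_zero).1 hlt
  obtain ⟨K, rfl⟩ := lt_omega0.1 hc
  have hK : ¬ ω ^ ((K : Ordinal) + 1) ∣ δ := fun hdvd =>
    (le_of_dvd hδ hdvd).not_gt (hN.trans (opow_mul_lt_opow (natCast_lt_omega0 N) (lt_add_one _)))
  obtain ⟨k, hk, hk1⟩ : ∃ k : ℕ, ω ^ (k : Ordinal) ∣ δ ∧ ¬ ω ^ ((k : Ordinal) + 1) ∣ δ := by
    by_contra! h
    have hall : ∀ k : ℕ, ω ^ (k : Ordinal) ∣ δ := by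
      intro k
      induction k with
      | zero => simp
      | succ k ih => exact_mod_cast h k ih
    exact hK (by exact_mod_cast hall (K + 1))
  obtain ⟨q, rfl⟩ := hk
  have hq : ¬ IsSuccPrelimit q := by
    rw [isSuccPrelimit_iff_omega0_dvd]
    rintro ⟨r, rfl⟩
    exact hk1 ⟨r, by rw [opow_add, opow_one, mul_assoc]⟩
  obtain ⟨γ, -, rfl⟩ := not_isSuccPrelimit_iff_succ_eq.1 hq
  exact ⟨k, γ, by rw [succ_eq_add_one]⟩

theorem exists_eq_omega0_opow_add_one_mul_add_one {δ : Ordinal} (hlt : δ < ω ^ ω)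
    (hδ : IsSuccLimit δ) : ∃ (m : ℕ) (γ : Ordinal), δ = ω ^ ((m : Ordinal) + 1) * (γ + 1) := by
  obtain ⟨k, γ, rfl⟩ := exists_eq_omega0_opow_mul_add_one hδ.ne_bot hlt
  obtain _ | m := k
  · rw [Nat.cast_zero, opow_zero, one_mul, ← succ_eq_add_one] at hδ
    exact absurd hδ.isSuccPrelimit (not_isSuccPrelimit_succ γ)
  · exact ⟨m, γ, by rw [Nat.cast_succ]⟩

end Ordinal

theorem sst_omega0_opow_mul_add_one (m : ℕ) (γ : Ordinal) (n : ℕ) :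
    sst (ω ^ ((m : Ordinal) + 1) * (γ + 1)) n = ω ^ ((m : Ordinal) + 1) * γ + ω ^ (m : Ordinal) * n := by
  have hrep : ∃ p : ℕ × Ordinal, ω ^ ((m : Ordinal) + 1) * (γ + 1)
      = ω ^ ((p.1 : Ordinal) + 1) * (p.2 + 1) := ⟨(m, γ), rfl⟩
  obtain ⟨hm, hγ⟩ := omega0_opow_mul_add_one_inj hrep.choose_spec
  rw [sst, dif_pos hrep, ← hγ, ← Nat.cast_inj.1 (succ_injective hm)]

theorem sst_lt_omega0_opow_mul_add_one (m : ℕ) (γ : Ordinal) (n : ℕ) :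
    sst (ω ^ ((m : Ordinal) + 1) * (γ + 1)) n < ω ^ ((m : Ordinal) + 1) * (γ + 1) := by
  rw [sst_omega0_opow_mul_add_one, mul_add_one, add_lt_add_iff_left]
  exact opow_mul_lt_opow (natCast_lt_omega0 n) (lt_add_one _)

theorem omega0_opow_dvd_sst_omega0_opow_mul_add_one (m : ℕ) (γ : Ordinal) (n : ℕ) :
    ω ^ (m : Ordinal) ∣ sst (ω ^ ((m : Ordinal) + 1) * (γ + 1)) n := by
  rw [sst_omega0_opow_mul_add_one]
  exact dvd_add ((opow_dvd_opow _ le_self_add).mul_right _) (dvd_mul_right _ _)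

theorem sst_bachmann_general (β δ : Ordinal)
    (hβ : β < omega0 ^ omega0)
    (hβlim : Order.IsSuccLimit β) (hδlim : Order.IsSuccLimit δ) (n : ℕ)
    (h1 : sst β n < δ) (h2 : δ ≤ sst β (n + 1)) :
    sst β n ≤ sst δ 0 := by
  obtain ⟨m, γ, rfl⟩ := exists_eq_omega0_opow_add_one_mul_add_one hβ hβlim
  have hδβ := h2.trans_lt (sst_lt_omega0_opow_mul_add_one m γ (n + 1))
  obtain ⟨j, ρ, rfl⟩ := exists_eq_omega0_opow_add_one_mul_add_one (hδβ.trans hβ) hδlim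
  have hjm : j < m := by
    by_contra! hmj
    have hdvd : ω ^ ((m : Ordinal) + 1) ∣ ω ^ ((j : Ordinal) + 1) * (ρ + 1) :=
      (opow_dvd_opow _ (by exact_mod_cast Nat.succ_le_succ hmj)).mul_right _
    rw [sst_omega0_opow_mul_add_one] at h1
    exact h1.not_ge ((le_mul_of_dvd_of_lt_mul_add_one hdvd hδβ).trans le_self_add)
  rw [sst_omega0_opow_mul_add_one j ρ 0, Nat.cast_zero, mul_zero, add_zero]
  refine le_mul_of_dvd_of_lt_mul_add_one ?_ h1
  exact (opow_dvd_opow _ (by exact_mod_cast hjm)).trans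
    (omega0_opow_dvd_sst_omega0_opow_mul_add_one m γ n)

/-- The standard system of cofinal sequences `s_st` on the ordinals below
`ω^ω` has the Bachmann property: for all nonzero limit ordinals `β, δ < ω^ω`
and every `n : ℕ`, if `s_st(β,n) < δ ≤ s_st(β,n+1)` then
`s_st(β,n) ≤ s_st(δ,0)`. -/
theorem sst_bachmann (β δ : Ordinal)
    (hβ : β < omega0 ^ omega0) (hδ : δ < omega0 ^ omega0)
    (hβlim : Order.IsSuccLimit β) (hδlim : Order.IsSuccLimit δ) (n : ℕ)
    (h1 : sst β n < δ) (h2 : δ ≤ sst β (n + 1)) :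
    sst β n ≤ sst δ 0 :=
  sst_bachmann_general β δ hβ hβlim hδlim n h1 h2
end
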